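/- arXiv:2605.06288 — 4 statements merged into one kernel-verified Lean document; each statement's English description precedes it below -/
import Mathlib

section
/- Let G be a finite directed acyclic graph in which every edge (a,b) satisfies |rel(a)| < |rel(b)| (i.e., the number of relatives strictly increases along every edge). Then every vertex y with at least one parent is the center of at least one unshielded collider: there exist distinct parents x, z of y that are not adjacent to each other. -/
/-!
Take a parent `x` of `y` with the largest number of relatives. If `y` were the center of no
unshielded collider, every other parent `z` of `y` would be adjacent to `x`; the edge cannot be
`x → z`, since relatives increase along edges, so it is `z → x`. Then every ancestor of `y` other
than `y` itself is an ancestor of `x`, and every descendant of `y` is a descendant of `x`, so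
`rel(y) ⊆ rel(x)`, contradicting `|rel(x)| < |rel(y)|`.
-/

open Relation

def ancSet {V : Type*} (E : V → V → Prop) (v : V) : Set V :=
  {x | ReflTransGen E x v}

def descSet {V : Type*} (E : V → V → Prop) (v : V) : Set V :=
  {z | ReflTransGen E v z}

def relSet {V : Type*} (E : V → V → Prop) (v : V) : Set V :=
  ⋃ x ∈ ancSet E v, descSet E x

def Adj {V : Type*} (E : V → V → Prop) (a b : V) : Prop := E a b ∨ E b a

def IsAcyclicRel {V : Type*} (E : V → V → Prop) : Prop :=
  ∀ v, ¬ TransGen E v v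

theorem descSet_subset_of_edge {V : Type*} {E : V → V → Prop} {x y : V} (hxy : E x y) :
    descSet E y ⊆ descSet E x :=
  fun _ hu => (ReflTransGen.single hxy).trans hu

theorem relSet_subset_of_forall_parent_reaches {V : Type*} {E : V → V → Prop} {x y : V}
    (hxy : E x y) (hpar : ∀ z, E z y → ReflTransGen E z x) :
    relSet E y ⊆ relSet E x := by
  intro u hu
  simp only [relSet, Set.mem_iUnion] at hu ⊢
  obtain ⟨w, hwy, hwu⟩ := hu
  rcases ReflTransGen.cases_tail hwy with rfl | ⟨z, hwz, hzy⟩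
  · exact ⟨x, ReflTransGen.refl, descSet_subset_of_edge hxy hwu⟩
  · exact ⟨w, hwz.trans (hpar z hzy), hwu⟩

theorem nonroot_is_collider_center_general {V : Type*} [Fintype V] (E : V → V → Prop)
    (hrel : ∀ a b, E a b → (relSet E a).ncard < (relSet E b).ncard)
    (y : V) (hy : ∃ x, E x y) :
    ∃ x z, x ≠ z ∧ E x y ∧ E z y ∧ ¬ Adj E x z := by
  by_contra! hshield
  obtain ⟨x, hxy, hmax⟩ := Set.Finite.exists_maximalFor
    (fun v => (relSet E v).ncard) {v | E v y} (Set.toFinite _) hy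
  have hpar : ∀ z, E z y → ReflTransGen E z x := by
    intro z hzy
    by_cases hzx : z = x
    · exact hzx ▸ ReflTransGen.refl
    rcases hshield x z (Ne.symm hzx) hxy hzy with hxz | hzx'
    · have hlt := hrel x z hxz
      exact absurd (hmax hzy hlt.le) hlt.not_ge
    · exact ReflTransGen.single hzx'
  have hle := Set.ncard_le_ncard (relSet_subset_of_forall_parent_reaches hxy hpar) (Set.toFinite _)
  exact (hrel x y hxy).not_ge hle

/-- If the number of relatives strictly increases along every edge, every
vertex with at least one parent is the center of an unshielded collider. -/
theorem nonroot_is_collider_center {V : Type*} [Fintype V] (E : V → V → Prop)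
    (hacyc : IsAcyclicRel E)
    (hrel : ∀ a b, E a b → (relSet E a).ncard < (relSet E b).ncard)
    (y : V) (hy : ∃ x, E x y) :
    ∃ x z, x ≠ z ∧ E x y ∧ E z y ∧ ¬ Adj E x z :=
  nonroot_is_collider_center_general E hrel y hy
end

section
/- Let G be a finite directed acyclic graph in which |rel(a)| < |rel(b)| for every edge (a,b). For any non-root vertex y, let C_y be the set of parents of y that form no unshielded collider centered at y, and D_y = pa(y) \ C_y. Then for every c ∈ C_y there exists d ∈ D_y with (c,d) ∈ E; that is, every such parent c has a child among the collider-endpoint parents of y. -/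
open Relation

/-- Parents of `y` adjacent to every other parent of `y`
(no unshielded collider centered at `y` through them). -/
def CSet {V : Type*} (E : V → V → Prop) (y : V) : Set V :=
  {x | E x y ∧ ∀ z, E z y → z ≠ x → Adj E x z}

/-- Parents of `y` that are endpoints of unshielded colliders centered at `y`. -/
def DSet {V : Type*} (E : V → V → Prop) (y : V) : Set V :=
  {x | E x y} \ CSet E y

/-!
Suppose `c ∈ C_y` had no child in `D_y`. Among `c` and those children of `c` that are parents
of `y` (all of them in `C_y`), pick `m` with the most relatives. Every other parent `p` of `y`
is adjacent to `m`; an edge `m → p` would put `p` in the same family with more relatives (the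
alternatives close a directed cycle, impossible as the relative count increases along edges).
So all parents of `y` point into `m`, whence `rel(y) = rel(m)`, contradicting `|rel m| < |rel y|`.
-/

section

variable {V : Type*} {E : V → V → Prop}

lemma mem_relSet_of_reflTransGen {x y : V} (h : ReflTransGen E x y) : x ∈ relSet E y :=
  Set.mem_biUnion h ReflTransGen.refl

lemma relSet_subset_of_reflTransGen {a b : V} (h : ReflTransGen E a b) :
    relSet E a ⊆ relSet E b :=
  Set.biUnion_subset_biUnion_left fun _ hx => ReflTransGen.trans hx h

lemma relSet_subset_of_forall_parent_reflTransGen {a b : V} (hab : E a b)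
    (hpa : ∀ p, E p b → ReflTransGen E p a) : relSet E b ⊆ relSet E a := by
  intro z hz
  simp only [relSet, Set.mem_iUnion] at hz
  obtain ⟨x, hxb, hxz⟩ := hz
  rcases ReflTransGen.cases_tail hxb with rfl | ⟨p, hxp, hpb⟩
  · exact Set.mem_biUnion ReflTransGen.refl (ReflTransGen.head hab hxz)
  · exact Set.mem_biUnion (hxp.trans (hpa p hpb)) hxz

lemma relSet_eq_of_forall_parent_reflTransGen {a b : V} (hab : E a b)
    (hpa : ∀ p, E p b → ReflTransGen E p a) : relSet E a = relSet E b :=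
  (relSet_subset_of_reflTransGen (.single hab)).antisymm
    (relSet_subset_of_forall_parent_reflTransGen hab hpa)

/-- The potential `f` rules out the cycles `c → m → c` and `c → m → p → c`. -/
lemma reflGen_of_mem_CSet (f : V → ℕ) (hf : ∀ a b, E a b → f a < f b) {y c m p : V}
    (hc : c ∈ CSet E y) (hcm : ReflGen E c m) (hmp : E m p) (hpy : E p y) : ReflGen E c p := by
  rcases hcm with _ | hcm
  · exact .single hmp
  by_cases hpc : p = c
  · subst hpc
    exact absurd ((hf _ _ hcm).trans (hf _ _ hmp)) (lt_irrefl _)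
  rcases hc.2 p hpy hpc with hcp | hpc'
  · exact .single hcp
  · have := (hf _ _ hcm).trans ((hf _ _ hmp).trans (hf _ _ hpc'))
    exact absurd this (lt_irrefl _)

end

theorem CSet_member_has_child_in_DSet_general {V : Type*} (E : V → V → Prop)
    (hrel : ∀ a b, E a b → (relSet E a).ncard < (relSet E b).ncard)
    (y : V) :
    ∀ c ∈ CSet E y, ∃ d ∈ DSet E y, E c d := by
  intro c hc
  by_contra! hno
  set M := {p | E p y ∧ ReflGen E c p}
  have hMfin : M.Finite :=
    (Set.finite_of_ncard_pos (Nat.zero_lt_of_lt (hrel c y hc.1))).subset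
      fun p hp => mem_relSet_of_reflTransGen (.single hp.1)
  obtain ⟨m, ⟨hmy, hcm⟩, hmax⟩ :=
    Set.exists_max_image M (fun p => (relSet E p).ncard) hMfin ⟨c, hc.1, .refl⟩
  have hmC : m ∈ CSet E y := by
    rcases hcm with _ | hcm
    · exact hc
    · by_contra hmD
      exact hno m ⟨hmy, hmD⟩ hcm
  have hparents : ∀ p, E p y → ReflTransGen E p m := by
    intro p hpy
    by_cases hpm : p = m
    · exact hpm ▸ .refl
    rcases hmC.2 p hpy hpm with hmp | hpm'
    · have hpM : p ∈ M := ⟨hpy, reflGen_of_mem_CSet _ hrel hc hcm hmp hpy⟩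
      exact absurd (hmax p hpM) (hrel m p hmp).not_ge
    · exact .single hpm'
  exact (hrel m y hmy).ne
    (congrArg Set.ncard (relSet_eq_of_forall_parent_reflTransGen hmy hparents))

/-- If the number of relatives strictly increases along every edge, then for a
non-root `y`, every `c ∈ C_y` has some child `d ∈ D_y`. -/
theorem CSet_member_has_child_in_DSet {V : Type*} [Fintype V] (E : V → V → Prop)
    (hacyc : IsAcyclicRel E)
    (hrel : ∀ a b, E a b → (relSet E a).ncard < (relSet E b).ncard)
    (y : V) (hy : ∃ x, E x y) :
    ∀ c ∈ CSet E y, ∃ d ∈ DSet E y, E c d :=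
  CSet_member_has_child_in_DSet_general E hrel y
end

section
/- Let G_S = (V_S, E_S) be a directed graph (possibly cyclic) containing a self-loop at every vertex, and let G_T be its time-unrolled DAG over T time steps: vertices are pairs (v, t) with v ∈ V_S, 1 ≤ t ≤ T, and edges are ((i,t),(j,t+1)) for (i,j) ∈ E_S and 1 ≤ t ≤ T-1. Suppose that for all i, j ∈ V_S, whenever there is a directed path from i to j in G_S, there is also a directed path from j to i. If |V_S| = p, then for all time indices s, t > p (with s, t ≤ T) and all vertices i, j ∈ V_S that lie in the same weakly connected component of G_S, the nodes (i, s) and (j, t) have the same set of roots in G_T (vertices in anc with only themselves as ancestor). -/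
open Relation

/-- Edge relation of the time-unrolled DAG over `T` steps of a summary graph
with edge relation `ES`: edges go from `(i,t)` to `(j,t+1)` whenever
`(i,j) ∈ E_S`, `1 ≤ t` and `t+1 ≤ T`. -/
def unrolled {V : Type*} (ES : V → V → Prop) (T : ℕ) (a b : V × ℕ) : Prop :=
  ES a.1 b.1 ∧ b.2 = a.2 + 1 ∧ 1 ≤ a.2 ∧ b.2 ≤ T

/-- Root set of a node in a DAG given by edge relation `E`: ancestors whose
only ancestor is themselves. -/
def rootsSet {V : Type*} (E : V → V → Prop) (v : V) : Set V :=
  {r | ReflTransGen E r v ∧ {q | ReflTransGen E q r} = {r}}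

/-- Paths of exact length `n` from `a` to `b` along relation `R`. -/
def pathF {V : Type*} (R : V → V → Prop) (n : ℕ) (a b : V) : Prop :=
  ∃ f : ℕ → V, f 0 = a ∧ f n = b ∧ ∀ k < n, R (f k) (f (k + 1))

section aux

variable {V : Type*} {R : V → V → Prop} {a b c : V} {n : ℕ}

lemma pathF_refl (a : V) : pathF R 0 a a :=
  ⟨fun _ => a, rfl, rfl, fun k hk => absurd hk (Nat.not_lt_zero k)⟩

lemma pathF_snoc (h : pathF R n a b) (hbc : R b c) : pathF R (n + 1) a c := by
  obtain ⟨f, h0, hn, hstep⟩ := h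
  refine ⟨fun k => if k ≤ n then f k else c, by simp [h0], by simp, ?_⟩
  intro k hk
  dsimp only
  by_cases hkn : k < n
  · rw [if_pos (by omega : k ≤ n), if_pos (by omega : k + 1 ≤ n)]
    exact hstep k hkn
  · have hk' : k = n := by omega
    subst hk'
    rw [if_pos (le_refl k), if_neg (by omega : ¬ (k + 1 ≤ k)), hn]
    exact hbc

lemma pathF_head (hac : R a c) (h : pathF R n c b) : pathF R (n + 1) a b := by
  obtain ⟨f, h0, hn, hstep⟩ := h
  refine ⟨fun k => if k = 0 then a else f (k - 1), by simp, by simp [hn], ?_⟩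
  intro k hk
  dsimp only
  rcases Nat.eq_zero_or_pos k with rfl | hk0
  · simpa [h0] using hac
  · rw [if_neg (by omega : ¬ k = 0), if_neg (by omega : ¬ k + 1 = 0),
      show k + 1 - 1 = (k - 1) + 1 by omega]
    exact hstep (k - 1) (by omega)

lemma pathF_cons (h : pathF R (n + 1) a b) : ∃ c, R a c ∧ pathF R n c b := by
  obtain ⟨f, h0, hn, hstep⟩ := h
  exact ⟨f 1, h0 ▸ hstep 0 (by omega),
    ⟨fun k => f (k + 1), rfl, hn, fun k hk => hstep (k + 1) (by omega)⟩⟩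

lemma rtg_iff_pathF : ReflTransGen R a b ↔ ∃ n, pathF R n a b := by
  constructor
  · intro h
    induction h with
    | refl => exact ⟨0, pathF_refl a⟩
    | tail _ hcb ih => obtain ⟨n, hp⟩ := ih; exact ⟨n + 1, pathF_snoc hp hcb⟩
  · rintro ⟨n, hp⟩
    induction n generalizing a with
    | zero => obtain ⟨f, h0, hn, _⟩ := hp; exact (h0 ▸ hn ▸ ReflTransGen.refl)
    | succ n ih =>
      obtain ⟨c, hac, hp'⟩ := pathF_cons hp
      exact ReflTransGen.head hac (ih hp')

lemma pathF_pad (hself : ∀ v, R v v) (h : pathF R n a b) :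
    ∀ m, n ≤ m → pathF R m a b := by
  intro m hm
  induction m with
  | zero => simpa [show n = 0 by omega] using h
  | succ m ih =>
    rcases Nat.lt_or_ge n (m + 1) with hlt | hge
    · exact pathF_head (hself a) (ih (by omega))
    · simpa [show n = m + 1 by omega] using h

lemma pathF_shorten [Fintype V] :
    ∀ n, pathF R n a b → ∃ m < Fintype.card V, pathF R m a b := by
  intro n
  induction n using Nat.strong_induction_on with
  | _ n ih =>
    intro h
    by_cases hn : n < Fintype.card V
    · exact ⟨n, hn, h⟩
    · push_neg at hn
      obtain ⟨f, h0, hne, hstep⟩ := h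
      have hcard : Fintype.card V < Fintype.card (Fin (n + 1)) := by
        simp only [Fintype.card_fin]; omega
      obtain ⟨x, y, hxy, hfeq⟩ :=
        Fintype.exists_ne_map_eq_of_card_lt (fun k : Fin (n + 1) => f k.val) hcard
      set i := min x.val y.val with hi
      set jj := max x.val y.val with hj
      have hij : i < jj := by
        rcases Nat.lt_or_ge x.val y.val with h' | h'
        · simp [hi, hj]; omega
        · have : x.val ≠ y.val := fun hc => hxy (Fin.ext hc)
          simp [hi, hj]; omega
      have hjn : jj ≤ n := by
        have := x.isLt; have := y.isLt
        simp [hj]; omega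
      have hfij : f i = f jj := by
        rcases Nat.lt_or_ge x.val y.val with h' | h'
        · simpa [hi, hj, Nat.min_eq_left h'.le, Nat.max_eq_right h'.le] using hfeq
        · simpa [hi, hj, Nat.min_eq_right h', Nat.max_eq_left h'] using hfeq.symm
      set d := jj - i with hd
      have hd1 : 1 ≤ d := by omega
      have hp' : pathF R (n - d) a b := by
        refine ⟨fun k => if k < i then f k else f (k + d), ?_, ?_, ?_⟩
        · dsimp only
          by_cases h0i : 0 < i
          · rw [if_pos h0i, h0]
          · have hi0 : i = 0 := by omega
            rw [if_neg (by omega : ¬ 0 < i), Nat.zero_add,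
              show d = jj by omega, ← hfij, hi0, h0]
        · dsimp only
          rw [if_neg (by omega : ¬ n - d < i), show n - d + d = n by omega, hne]
        · intro k hk
          dsimp only
          by_cases hki : k < i
          · rw [if_pos hki]
            by_cases hki1 : k + 1 < i
            · rw [if_pos hki1]
              exact hstep k (by omega)
            · have hk1 : k + 1 = i := by omega
              rw [if_neg hki1, hk1, show i + d = jj by omega, ← hfij, ← hk1]
              exact hstep k (by omega)
          · rw [if_neg hki, if_neg (by omega : ¬ k + 1 < i),
              show k + 1 + d = k + d + 1 by omega]
            exact hstep (k + d) (by omega)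
      exact ih (n - d) (by omega) hp'

end aux

section unrolledAux

variable {V : Type*} {ES : V → V → Prop} {T : ℕ}

lemma unrolled_rtg_char {a b : V × ℕ} (h : ReflTransGen (unrolled ES T) a b) :
    a = b ∨ (1 ≤ a.2 ∧ a.2 < b.2 ∧ b.2 ≤ T ∧ pathF ES (b.2 - a.2) a.1 b.1) := by
  induction h with
  | refl => exact Or.inl rfl
  | @tail c b _ hcb ih =>
    obtain ⟨hE, hb2, hc1, hbT⟩ := hcb
    rcases ih with rfl | ⟨h1, hlt, _, hpath⟩
    · right
      refine ⟨hc1, by omega, hbT, ?_⟩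
      rw [show b.2 - a.2 = 0 + 1 by omega]
      exact pathF_snoc (pathF_refl a.1) hE
    · right
      refine ⟨h1, by omega, hbT, ?_⟩
      rw [show b.2 - a.2 = (c.2 - a.2) + 1 by omega]
      exact pathF_snoc hpath hE

lemma pathF_to_unrolled :
    ∀ (n : ℕ) (x y : V) (u : ℕ), pathF ES n x y → 1 ≤ u → u + n ≤ T →
      ReflTransGen (unrolled ES T) (x, u) (y, u + n) := by
  intro n
  induction n with
  | zero =>
    intro x y u h _ _
    obtain ⟨f, h0, hn, _⟩ := h
    rw [show x = y from h0 ▸ hn ▸ rfl]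
    exact ReflTransGen.refl
  | succ n ih =>
    intro x y u h hu hT
    obtain ⟨c, hxc, hp⟩ := pathF_cons h
    have step : unrolled ES T (x, u) (c, u + 1) := ⟨hxc, rfl, hu, by omega⟩
    have htail := ih c y (u + 1) hp (by omega) (by omega)
    rw [show u + (n + 1) = (u + 1) + n by omega]
    exact ReflTransGen.head step htail

lemma roots_char [Fintype V] (hself : ∀ v, ES v v) (i : V) (s : ℕ)
    (hs : Fintype.card V < s) (hsT : s ≤ T) :
    rootsSet (unrolled ES T) (i, s) = {x : V × ℕ | x.2 = 1 ∧ ReflTransGen ES x.1 i} := by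
  have hcard1 : 1 ≤ Fintype.card V := Fintype.card_pos_iff.mpr ⟨i⟩
  ext ⟨r, u⟩
  simp only [rootsSet, Set.mem_setOf_eq]
  constructor
  · rintro ⟨hanc, hroot⟩
    have hpredcontra : ∀ (hu2 : 2 ≤ u) (huT : u ≤ T), False := by
      intro hu2 huT
      have hpred : ReflTransGen (unrolled ES T) (r, u - 1) (r, u) :=
        ReflTransGen.single ⟨hself r, by omega, by omega, huT⟩
      have : (r, u - 1) ∈ ({(r, u)} : Set (V × ℕ)) := hroot ▸ hpred
      simp only [Set.mem_singleton_iff, Prod.mk.injEq] at this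
      omega
    rcases unrolled_rtg_char hanc with heq | ⟨h1, hlt, hT, hpath⟩
    · exfalso
      have hu : u = s := (Prod.mk.injEq _ _ _ _).mp heq |>.2
      exact hpredcontra (by omega) (by omega)
    · have hu1 : u = 1 := by
        by_contra hne
        exact hpredcontra (by omega) (by omega)
      exact ⟨hu1, rtg_iff_pathF.mpr ⟨s - u, hpath⟩⟩
  · rintro ⟨hu, hri⟩
    subst hu
    constructor
    · obtain ⟨n, hp⟩ := rtg_iff_pathF.mp hri
      obtain ⟨m, hm, hp'⟩ := pathF_shorten n hp
      have hp'' : pathF ES (s - 1) r i := pathF_pad hself hp' (s - 1) (by omega)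
      have := pathF_to_unrolled (T := T) (s - 1) r i 1 hp'' le_rfl (by omega)
      rwa [show 1 + (s - 1) = s by omega] at this
    · ext q
      simp only [Set.mem_setOf_eq, Set.mem_singleton_iff]
      constructor
      · intro hq
        rcases unrolled_rtg_char hq with h | ⟨h1, hlt, _⟩
        · exact h
        · omega
      · rintro rfl
        exact ReflTransGen.refl

end unrolledAux

/-- In the time-unrolled DAG of a summary graph with all self-loops, whose
reachability relation is symmetric, any two nodes at times beyond
`p = |V_S|` whose summary vertices lie in the same weakly connected component
have the same set of roots. -/
theorem unrolled_roots_eq {V : Type*} [Fintype V] (ES : V → V → Prop) (T : ℕ)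
    (hp : 2 ≤ Fintype.card V)
    (hself : ∀ v, ES v v)
    (hsym : ∀ i j, ReflTransGen ES i j → ReflTransGen ES j i)
    (i j : V) (s t : ℕ)
    (hs : Fintype.card V < s) (ht : Fintype.card V < t)
    (hsT : s ≤ T) (htT : t ≤ T)
    (hconn : ReflTransGen (fun a b => ES a b ∨ ES b a) i j) :
    rootsSet (unrolled ES T) (i, s) = rootsSet (unrolled ES T) (j, t) := by
  have hij : ReflTransGen ES i j := by
    induction hconn with
    | refl => exact ReflTransGen.refl
    | tail _ hstep ih =>
      rcases hstep with h' | h'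
      · exact ih.tail h'
      · exact ih.trans (hsym _ _ (ReflTransGen.single h'))
  have hji : ReflTransGen ES j i := hsym i j hij
  rw [roots_char hself i s hs hsT, roots_char hself j t ht htT]
  ext ⟨r, u⟩
  simp only [Set.mem_setOf_eq]
  exact ⟨fun ⟨h1, h2⟩ => ⟨h1, h2.trans hij⟩, fun ⟨h1, h2⟩ => ⟨h1, h2.trans hji⟩⟩
end

section
/- Let G = (V, E) be a finite directed acyclic graph such that for every edge (a,b) ∈ E the number of relatives strictly increases: |rel(a)| < |rel(b)|. Then there is no DAG other than G itself with the same skeleton and the same set of unshielded colliders as G; that is, the Markov equivalence class of G contains only G. -/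
open Relation

lemma mem_relSet {V : Type*} {E : V → V → Prop} {v w : V} :
    w ∈ relSet E v ↔ ∃ x, ReflTransGen E x v ∧ ReflTransGen E x w := by
  simp [relSet, ancSet, descSet]

/-- If the number of relatives strictly increases along every edge of a finite
DAG `G`, then any DAG `H` with the same skeleton and the same unshielded
colliders as `G` equals `G`: the Markov equivalence class of `G` is a
singleton. -/
theorem singleton_MEC_of_rel_sortable {V : Type*} [Fintype V]
    (E F : V → V → Prop) (hE : IsAcyclicRel E) (hF : IsAcyclicRel F)
    (hrel : ∀ a b, E a b → (relSet E a).ncard < (relSet E b).ncard)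
    (hskel : ∀ a b, (E a b ∨ E b a) ↔ (F a b ∨ F b a))
    (hcolliders : ∀ x y z,
      (E x y ∧ E z y ∧ x ≠ z ∧ ¬ (E x z ∨ E z x)) ↔
        (F x y ∧ F z y ∧ x ≠ z ∧ ¬ (F x z ∨ F z x))) :
    ∀ a b, E a b ↔ F a b := by
  have noBothF : ∀ x y, F x y → F y x → False := fun x y h1 h2 =>
    hF x (TransGen.head h1 (TransGen.single h2))
  have key : ∀ n a b, (relSet E b).ncard - (relSet E a).ncard ≤ n → E a b → F a b := by
    intro n
    induction n using Nat.strong_induction_on with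
    | _ n ih =>
      intro a b hm hab
      by_contra hFab
      have hFba : F b a := ((hskel a b).mp (Or.inl hab)).resolve_left hFab
      -- find a witness w ∈ rel(b) \ rel(a)
      have hsub : ¬ (relSet E b ⊆ relSet E a) := by
        intro hs
        exact absurd (hrel a b hab)
          (not_lt.mpr (Set.ncard_le_ncard hs (Set.toFinite _)))
      obtain ⟨w, hwb, hwa⟩ := Set.not_subset.mp hsub
      obtain ⟨y, hyb, hyw⟩ := mem_relSet.mp hwb
      have hya : ¬ ReflTransGen E y a := fun h => hwa (mem_relSet.mpr ⟨y, h, hyw⟩)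
      -- the path y →* b is nontrivial; take its last edge c → b
      rcases (ReflTransGen.cases_tail hyb) with rfl | ⟨c, hyc, hcb⟩
      · exact hwa (mem_relSet.mpr ⟨a, ReflTransGen.refl, ReflTransGen.head hab hyw⟩)
      · have hca : c ≠ a := fun h => hya (h ▸ hyc)
        by_cases hEca : E c a
        · exact hya (hyc.tail hEca)
        · by_cases hEac : E a c
          · -- triangle a → c → b, a → b
            have h1 := hrel a c hEac
            have h2 := hrel c b hcb
            have hFac : F a c :=
              ih ((relSet E c).ncard - (relSet E a).ncard) (by omega) a c le_rfl hEac
            have hFbc : F b c := by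
              rcases (hskel c b).mp (Or.inl hcb) with h | h
              · exact (hF b (TransGen.head hFba (TransGen.head hFac
                  (TransGen.single h)))).elim
              · exact h
            have hFcb : F c b :=
              ih ((relSet E b).ncard - (relSet E c).ncard) (by omega) c b le_rfl hcb
            exact noBothF c b hFcb hFbc
          · -- unshielded collider (c, b, a) in E, hence in F
            have hcol := (hcolliders c b a).mp
              ⟨hcb, hab, hca, fun h => h.elim hEca hEac⟩
            exact hFab hcol.2.1
  intro a b
  constructor
  · exact fun h => key _ a b le_rfl h
  · intro hFab
    rcases (hskel a b).mpr (Or.inl hFab) with h | h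
    · exact h
    · exact absurd (key _ b a le_rfl h) (fun h' => noBothF a b hFab h')
end
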